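/- arXiv:2012.15002 — 9 statements merged into one kernel-verified Lean document; each statement's English description precedes it below -/
import Mathlib

section
/- Let b_0 < b_1 < ... < b_{m+1} be real numbers (borders), let J be a finite family of jobs all contained in [b_0, b_{m+1}], and let K be a positive integer. For each i = 1, ..., m+1 let S_i be a pairwise disjoint subfamily of maximum cardinality among the jobs of J contained in [b_{i-1}, b_i], and suppose |S_i| >= K for every i. Then for every pairwise disjoint subfamily A of J, one has (K+1) * (|S_1| + ... + |S_{m+1}|) >= K * |A|; i.e., the union of the per-region optimal solutions is a (K+1)/K-approximation of a maximum pairwise disjoint subfamily. -/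
/-! Every job of a disjoint family `A` either lies inside one of the regions `[b_{i-1}, b_i]` or
crosses one of the `m` inner borders, and two disjoint jobs cannot cross the same border. Hence
`|A| ≤ ∑ |S_i| + m`, and `K * m < K * (m + 1) ≤ ∑ |S_i|` absorbs the `m` crossing jobs. -/

/-- A finite family of jobs (intervals `[s, e]`, represented as pairs `(s, e)`)
is pairwise disjoint (a single-machine schedule / independent set). -/
def JobsDisjoint (F : Finset (ℝ × ℝ)) : Prop :=
  ∀ j ∈ F, ∀ j' ∈ F, j ≠ j' → Disjoint (Set.Icc j.1 j.2) (Set.Icc j'.1 j'.2)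

open Finset

def Crosses (j : ℝ × ℝ) (x : ℝ) : Prop := j.1 < x ∧ x < j.2

lemma JobsDisjoint.mono {F G : Finset (ℝ × ℝ)} (hG : JobsDisjoint G) (h : F ⊆ G) :
    JobsDisjoint F := fun j hj j' hj' hne => hG j (h hj) j' (h hj') hne

open Classical in
lemma JobsDisjoint.card_filter_crosses_le_one {F : Finset (ℝ × ℝ)} (hF : JobsDisjoint F)
    (x : ℝ) : #{j ∈ F | Crosses j x} ≤ 1 := by
  refine card_le_one.2 fun j hj j' hj' => ?_
  simp only [mem_filter] at hj hj'
  by_contra hne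
  exact Set.disjoint_left.1 (hF j hj.1 j' hj'.1 hne) ⟨hj.2.1.le, hj.2.2.le⟩
    ⟨hj'.2.1.le, hj'.2.2.le⟩

lemma exists_Icc_subset_or_crosses {n : ℕ} (b : Fin (n + 1) → ℝ) {j : ℝ × ℝ}
    (hj : j.1 < j.2) (h₀ : b 0 ≤ j.1) (h₁ : j.2 ≤ b (Fin.last n)) :
    (∃ i : Fin n, Set.Icc j.1 j.2 ⊆ Set.Icc (b i.castSucc) (b i.succ)) ∨
      ∃ k, Crosses j (b k) := by
  induction n with
  | zero => exact absurd (h₀.trans_lt (hj.trans_le h₁)) (lt_irrefl _)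
  | succ n ih =>
    by_cases hlast : j.2 ≤ b (Fin.last n).castSucc
    · rcases ih (b ∘ Fin.castSucc) h₀ hlast with ⟨i, hi⟩ | ⟨k, hk⟩
      · exact .inl ⟨i.castSucc, by rw [Fin.succ_castSucc]; exact hi⟩
      · exact .inr ⟨k.castSucc, hk⟩
    · by_cases hmid : b (Fin.last n).castSucc ≤ j.1
      · exact .inl ⟨Fin.last n, Set.Icc_subset_Icc hmid (by simpa using h₁)⟩
      · exact .inr ⟨_, not_le.1 hmid, not_le.1 hlast⟩

lemma exists_Icc_subset_or_crosses_mem_Ioo {n : ℕ} (b : Fin (n + 2) → ℝ) {j : ℝ × ℝ}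
    (hj : j.1 < j.2) (hJ : Set.Icc j.1 j.2 ⊆ Set.Icc (b 0) (b (Fin.last (n + 1)))) :
    (∃ i : Fin (n + 1), Set.Icc j.1 j.2 ⊆ Set.Icc (b i.castSucc) (b i.succ)) ∨
      ∃ k ∈ Ioo 0 (Fin.last (n + 1)), Crosses j (b k) := by
  have h₀ : b 0 ≤ j.1 := (hJ ⟨le_rfl, hj.le⟩).1
  have h₁ : j.2 ≤ b (Fin.last (n + 1)) := (hJ ⟨hj.le, le_rfl⟩).2
  refine (exists_Icc_subset_or_crosses b hj h₀ h₁).imp_right fun ⟨k, hk⟩ => ⟨k, ?_, hk⟩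
  have hk0 : k ≠ 0 := by rintro rfl; exact hk.1.not_ge h₀
  have hkl : k ≠ Fin.last _ := by rintro rfl; exact hk.2.not_ge h₁
  exact mem_Ioo.2 ⟨Fin.pos_iff_ne_zero.2 hk0, Fin.lt_last_iff_ne_last.2 hkl⟩

open Classical in
lemma JobsDisjoint.card_le_sum_card_filter_subset_add {m : ℕ} (b : Fin (m + 2) → ℝ)
    {A : Finset (ℝ × ℝ)} (hA : JobsDisjoint A)
    (hAb : ∀ j ∈ A, j.1 < j.2 ∧ Set.Icc j.1 j.2 ⊆ Set.Icc (b 0) (b (Fin.last (m + 1)))) :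
    #A ≤
      ∑ i : Fin (m + 1), #{j ∈ A | Set.Icc j.1 j.2 ⊆ Set.Icc (b i.castSucc) (b i.succ)} + m := by
  have hcover : A ⊆ (univ.biUnion fun i : Fin (m + 1) =>
      {j ∈ A | Set.Icc j.1 j.2 ⊆ Set.Icc (b i.castSucc) (b i.succ)}) ∪
      (Ioo 0 (Fin.last (m + 1))).biUnion fun k => {j ∈ A | Crosses j (b k)} := by
    intro j hj
    rcases exists_Icc_subset_or_crosses_mem_Ioo b (hAb j hj).1 (hAb j hj).2 with
      ⟨i, hi⟩ | ⟨k, hk, hjk⟩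
    · exact mem_union_left _ (mem_biUnion.2 ⟨i, mem_univ _, mem_filter.2 ⟨hj, hi⟩⟩)
    · exact mem_union_right _ (mem_biUnion.2 ⟨k, hk, mem_filter.2 ⟨hj, hjk⟩⟩)
  have hcross : ∑ k ∈ Ioo 0 (Fin.last (m + 1)), #{j ∈ A | Crosses j (b k)} ≤ m := by
    calc _ ≤ ∑ _k ∈ Ioo 0 (Fin.last (m + 1)), 1 :=
          sum_le_sum fun k _ => hA.card_filter_crosses_le_one (b k)
      _ = m := by simp
  calc #A ≤ _ := card_le_card hcover
    _ ≤ _ := card_union_le _ _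
    _ ≤ _ := add_le_add card_biUnion_le (card_biUnion_le.trans hcross)

theorem stmt0_general (m : ℕ) (b : Fin (m + 2) → ℝ)
    (J : Finset (ℝ × ℝ))
    (hJ : ∀ j ∈ J, j.1 < j.2 ∧ Set.Icc j.1 j.2 ⊆ Set.Icc (b 0) (b (Fin.last (m + 1))))
    (K : ℕ)
    (S : Fin (m + 1) → Finset (ℝ × ℝ))
    (hSmax : ∀ i, ∀ T ⊆ J,
      (∀ j ∈ T, Set.Icc j.1 j.2 ⊆ Set.Icc (b i.castSucc) (b i.succ)) →
      JobsDisjoint T → T.card ≤ (S i).card)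
    (hSK : ∀ i, K ≤ (S i).card)
    (A : Finset (ℝ × ℝ)) (hA : A ⊆ J) (hAdisj : JobsDisjoint A) :
    K * A.card ≤ (K + 1) * ∑ i, (S i).card := by
  classical
  have hregion (i : Fin (m + 1)) :
      #{j ∈ A | Set.Icc j.1 j.2 ⊆ Set.Icc (b i.castSucc) (b i.succ)} ≤ #(S i) :=
    hSmax i _ ((filter_subset _ _).trans hA) (fun j hj => (mem_filter.1 hj).2)
      (hAdisj.mono (filter_subset _ _))
  have hcard : #A ≤ ∑ i, #(S i) + m :=
    (hAdisj.card_le_sum_card_filter_subset_add b fun j hj => hJ j (hA hj)).trans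
      (Nat.add_le_add_right (sum_le_sum fun i _ => hregion i) m)
  have hbig : (m + 1) * K ≤ ∑ i, #(S i) := by
    simpa using sum_le_sum fun i (_ : i ∈ univ) => hSK i
  calc K * #A ≤ K * (∑ i, #(S i) + m) := Nat.mul_le_mul_left K hcard
    _ ≤ (K + 1) * ∑ i, #(S i) := by nlinarith

/-- if within each pair of consecutive borders we take a maximum-cardinality
pairwise disjoint subfamily of jobs contained in that region, and each such optimum has
size at least `K`, then the union of these per-region optima is a `(K+1)/K`-approximation
of any pairwise disjoint subfamily. -/
theorem stmt0 (m : ℕ) (b : Fin (m + 2) → ℝ) (hb : StrictMono b)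
    (J : Finset (ℝ × ℝ))
    (hJ : ∀ j ∈ J, j.1 < j.2 ∧ Set.Icc j.1 j.2 ⊆ Set.Icc (b 0) (b (Fin.last (m + 1))))
    (K : ℕ) (hK : 0 < K)
    (S : Fin (m + 1) → Finset (ℝ × ℝ))
    (hSsub : ∀ i, S i ⊆ J)
    (hScont : ∀ i, ∀ j ∈ S i, Set.Icc j.1 j.2 ⊆ Set.Icc (b i.castSucc) (b i.succ))
    (hSdisj : ∀ i, JobsDisjoint (S i))
    (hSmax : ∀ i, ∀ T ⊆ J,
      (∀ j ∈ T, Set.Icc j.1 j.2 ⊆ Set.Icc (b i.castSucc) (b i.succ)) →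
      JobsDisjoint T → T.card ≤ (S i).card)
    (hSK : ∀ i, K ≤ (S i).card)
    (A : Finset (ℝ × ℝ)) (hA : A ⊆ J) (hAdisj : JobsDisjoint A) :
    K * A.card ≤ (K + 1) * ∑ i, (S i).card :=
  stmt0_general m b J hJ K S hSmax hSK A hA hAdisj
end

section
/- Let M and K be positive integers, let b_0 < b_1 < ... < b_{m+1} be real numbers (borders), and let J be a finite family of jobs all contained in [b_0, b_{m+1}]. For each i = 1, ..., m+1 let S_i be an M-machine schedule of maximum cardinality among the jobs of J contained in [b_{i-1}, b_i], and suppose |S_i| >= K for every i. Then for every M-machine schedule A consisting of jobs of J, one has (K+M) * (|S_1| + ... + |S_{m+1}|) >= K * |A|. In particular, taking K = M/eps, the union of the per-region optimal M-machine schedules is a (1+eps)-approximation of a maximum-cardinality M-machine schedule. -/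
/-- A finite family of jobs (intervals `[s, e]`, represented as pairs `(s, e)`)
forms an `M`-machine schedule: there is an assignment of jobs to machines such that
jobs assigned to the same machine are pairwise disjoint. -/
def IsMSchedule (M : ℕ) (F : Finset (ℝ × ℝ)) : Prop :=
  ∃ f : ℝ × ℝ → Fin M, ∀ j ∈ F, ∀ j' ∈ F, j ≠ j' → f j = f j' →
    Disjoint (Set.Icc j.1 j.2) (Set.Icc j'.1 j'.2)

/-- if within each pair of consecutive borders we take a maximum-cardinality
`M`-machine schedule of jobs contained in that region, and each such optimum has size at
least `K`, then for every `M`-machine schedule `A` of jobs of `J` we have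
`(K+M) * ∑ |S_i| ≥ K * |A|`. -/
theorem stmt1 (M : ℕ) (hM : 0 < M) (K : ℕ) (hK : 0 < K)
    (m : ℕ) (b : Fin (m + 2) → ℝ) (hb : StrictMono b)
    (J : Finset (ℝ × ℝ))
    (hJ : ∀ j ∈ J, j.1 < j.2 ∧ Set.Icc j.1 j.2 ⊆ Set.Icc (b 0) (b (Fin.last (m + 1))))
    (S : Fin (m + 1) → Finset (ℝ × ℝ))
    (hSsub : ∀ i, S i ⊆ J)
    (hScont : ∀ i, ∀ j ∈ S i, Set.Icc j.1 j.2 ⊆ Set.Icc (b i.castSucc) (b i.succ))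
    (hSsched : ∀ i, IsMSchedule M (S i))
    (hSmax : ∀ i, ∀ T ⊆ J,
      (∀ j ∈ T, Set.Icc j.1 j.2 ⊆ Set.Icc (b i.castSucc) (b i.succ)) →
      IsMSchedule M T → T.card ≤ (S i).card)
    (hSK : ∀ i, K ≤ (S i).card)
    (A : Finset (ℝ × ℝ)) (hA : A ⊆ J) (hAsched : IsMSchedule M A) :
    K * A.card ≤ (K + M) * ∑ i, (S i).card := by
  classical
  obtain ⟨f, hf⟩ := hAsched
  set cont : ℝ × ℝ → Fin (m+1) → Prop :=
    fun j i => Set.Icc j.1 j.2 ⊆ Set.Icc (b i.castSucc) (b i.succ) with hcontdef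
  set cross : ℝ × ℝ → Fin (m+1) → Prop :=
    fun j k => b k.succ ∈ Set.Ioo j.1 j.2 with hcrossdef
  have key : ∀ j ∈ A, (∃ i, cont j i) ∨ (∃ k, cross j k) := by
    intro j hj
    by_contra hcon
    push_neg at hcon
    obtain ⟨hc1, hc2⟩ := hcon
    obtain ⟨hlt, hsub⟩ := hJ j (hA hj)
    have h01 : b 0 ≤ j.1 := (hsub ⟨le_refl _, hlt.le⟩).1
    have h2l : j.2 ≤ b (Fin.last (m+1)) := (hsub ⟨hlt.le, le_refl _⟩).2
    have hs : (Finset.univ.filter (fun k : Fin (m+1) => b k.castSucc ≤ j.1)).Nonempty := by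
      refine ⟨0, ?_⟩
      simp only [Finset.mem_filter, Finset.mem_univ, true_and]
      have : ((0 : Fin (m+1)).castSucc) = (0 : Fin (m+2)) := rfl
      rw [this]; exact h01
    set i := (Finset.univ.filter (fun k : Fin (m+1) => b k.castSucc ≤ j.1)).max' hs with hi
    have hile : b i.castSucc ≤ j.1 := by
      have := Finset.max'_mem _ hs
      rw [Finset.mem_filter] at this
      exact this.2
    have hgt : j.1 < b i.succ := by
      by_contra hle
      push_neg at hle
      have hne : i.succ ≠ Fin.last (m+1) := by
        intro h
        rw [h] at hle
        exact absurd hlt (not_lt.2 (h2l.trans hle))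
      have him : i.val < m := by
        have h1 : i.succ.val = i.val + 1 := Fin.val_succ i
        have h2 : i.succ.val ≠ m + 1 := by
          intro h
          exact hne (Fin.ext (by rw [Fin.val_succ] at h ⊢; rw [Fin.val_last]; omega))
        have := i.isLt
        omega
      set k : Fin (m+1) := ⟨i.val + 1, by omega⟩ with hk
      have hkc : k.castSucc = i.succ := Fin.ext (by simp [hk])
      have hkmem : k ∈ Finset.univ.filter (fun k : Fin (m+1) => b k.castSucc ≤ j.1) := by
        rw [Finset.mem_filter]
        exact ⟨Finset.mem_univ _, by rw [hkc]; exact hle⟩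
      have hle2 : k ≤ i := by rw [hi]; exact Finset.le_max' _ k hkmem
      have hkval : k.val = i.val + 1 := rfl
      have : k.val ≤ i.val := hle2
      omega
    have h2le : j.2 ≤ b i.succ := by
      by_contra h
      push_neg at h
      exact hc2 i ⟨hgt, h⟩
    exact hc1 i (Set.Icc_subset_Icc hile h2le)
  set c : ℝ × ℝ → Fin (m+1) ⊕ Fin (m+1) := fun j =>
    if h : ∃ i, cont j i then Sum.inl h.choose
    else if h' : ∃ k, cross j k then Sum.inr h'.choose
    else Sum.inl 0 with hc
  have hinl : ∀ j ∈ A, ∀ i, c j = Sum.inl i → cont j i := by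
    intro j hj i hji
    rw [hc] at hji
    beta_reduce at hji
    by_cases h : ∃ i, cont j i
    · rw [dif_pos h] at hji
      have := h.choose_spec
      exact (Sum.inl.inj hji) ▸ this
    · rw [dif_neg h] at hji
      by_cases h' : ∃ k, cross j k
      · rw [dif_pos h'] at hji; exact absurd hji (by simp)
      · rcases key j hj with h2 | h2
        exacts [absurd h2 h, absurd h2 h']
  have hinr : ∀ j ∈ A, ∀ k, c j = Sum.inr k → cross j k := by
    intro j hj k hjk
    rw [hc] at hjk
    beta_reduce at hjk
    by_cases h : ∃ i, cont j i
    · rw [dif_pos h] at hjk; exact absurd hjk (by simp)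
    · rw [dif_neg h] at hjk
      by_cases h' : ∃ k, cross j k
      · rw [dif_pos h'] at hjk
        have := h'.choose_spec
        exact (Sum.inr.inj hjk) ▸ this
      · rw [dif_neg h'] at hjk; exact absurd hjk (by simp)
  have hcard : A.card = ∑ x : Fin (m+1) ⊕ Fin (m+1),
      (A.filter (fun j => c j = x)).card := by
    exact Finset.card_eq_sum_card_fiberwise (fun j _ => Finset.mem_univ (c j))
  have hbound1 : ∀ i : Fin (m+1),
      (A.filter (fun j => c j = Sum.inl i)).card ≤ (S i).card := by
    intro i
    refine hSmax i _ (fun j hj => hA (Finset.mem_filter.mp hj).1) ?_ ?_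
    · intro j hj
      obtain ⟨hjA, hjc⟩ := Finset.mem_filter.mp hj
      exact hinl j hjA i hjc
    · exact ⟨f, fun j hj j' hj' hne hfe =>
        hf j (Finset.mem_filter.mp hj).1 j' (Finset.mem_filter.mp hj').1 hne hfe⟩
  have hbound2 : ∀ k : Fin (m+1),
      (A.filter (fun j => c j = Sum.inr k)).card ≤ M := by
    intro k
    have : (A.filter (fun j => c j = Sum.inr k)).card ≤ (Finset.univ : Finset (Fin M)).card := by
      apply Finset.card_le_card_of_injOn f (fun _ _ => Finset.mem_univ _)
      intro j hj j' hj' hfe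
      simp only [Finset.coe_filter, Set.mem_setOf_eq] at hj hj'
      by_contra hne
      have hd := hf j (hj.1) j' (hj'.1) hne hfe
      have hcr := hinr j hj.1 k hj.2
      have hcr' := hinr j' hj'.1 k hj'.2
      have hm1 : b k.succ ∈ Set.Icc j.1 j.2 := ⟨hcr.1.le, hcr.2.le⟩
      have hm2 : b k.succ ∈ Set.Icc j'.1 j'.2 := ⟨hcr'.1.le, hcr'.2.le⟩
      exact Set.disjoint_left.mp hd hm1 hm2
    simpa using this
  have hAle : A.card ≤ (∑ i, (S i).card) + (m+1) * M := by
    rw [hcard, Fintype.sum_sum_type]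
    refine Nat.add_le_add (Finset.sum_le_sum (fun i _ => hbound1 i)) ?_
    calc ∑ k : Fin (m+1), (A.filter (fun j => c j = Sum.inr k)).card
        ≤ ∑ _k : Fin (m+1), M := Finset.sum_le_sum (fun k _ => hbound2 k)
      _ = (m+1) * M := by simp [Finset.sum_const, mul_comm]
  have hSge : (m+1) * K ≤ ∑ i, (S i).card := by
    calc (m+1) * K = ∑ _i : Fin (m+1), K := by simp [Finset.sum_const, mul_comm]
      _ ≤ ∑ i, (S i).card := Finset.sum_le_sum (fun i _ => hSK i)
  nlinarith [Nat.mul_le_mul_left K hAle, Nat.mul_le_mul_left M hSge]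
end

section
/- Let eps > 0, let K be a positive integer, and let v_1, ..., v_K be real numbers with v_j >= 1 for all j. Let S = { (1+eps/K)^i : i a nonnegative integer }, and define a running total by c_0 = 0 and, for j = 1, ..., K, c_j = the largest element of S that is at most c_{j-1} + v_j (this is well defined since c_{j-1} + v_j >= 1). Then the final running total satisfies c_K >= (1 - eps) * (v_1 + ... + v_K); i.e., repeatedly rounding the running total down to the nearest power of (1+eps/K) yields a (1+eps)-approximation of the true sum. -/
/-- repeatedly rounding a running total down to the nearest power of
`(1 + ε/K)` while adding `K` values, each at least `1`, yields a final running total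
that is at least `(1 - ε)` times the true sum. -/
theorem stmt2 (ε : ℝ) (hε : 0 < ε) (K : ℕ) (hK : 0 < K)
    (v : ℕ → ℝ) (hv : ∀ j < K, 1 ≤ v j)
    (c : ℕ → ℝ) (hc0 : c 0 = 0)
    (hmem : ∀ j < K, ∃ i : ℕ, c (j + 1) = (1 + ε / K) ^ i)
    (hle : ∀ j < K, c (j + 1) ≤ c j + v j)
    (hmax : ∀ j < K, ∀ i : ℕ, (1 + ε / K) ^ i ≤ c j + v j → (1 + ε / K) ^ i ≤ c (j + 1)) :
    (1 - ε) * ∑ j ∈ Finset.range K, v j ≤ c K := by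
  set b : ℝ := 1 + ε / K with hbdef
  have hKpos : (0:ℝ) < K := by exact_mod_cast hK
  have hb : 1 < b := by
    have : 0 < ε / K := div_pos hε hKpos
    simp [hbdef]; linarith
  have hbpos : 0 < b := lt_trans one_pos hb
  -- key step: c j + v j ≤ b * c (j+1)
  have key : ∀ j < K, c j + v j ≤ b * c (j + 1) := by
    intro j hj
    obtain ⟨m, hm⟩ := hmem j hj
    by_contra h
    push_neg at h
    have h1 : b ^ (m + 1) ≤ c j + v j := by
      rw [pow_succ]
      calc b ^ m * b = b * c (j+1) := by rw [hm]; ring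
        _ ≤ c j + v j := le_of_lt h
    have h2 := hmax j hj (m + 1) h1
    rw [hm] at h2
    have : b ^ m < b ^ (m + 1) := pow_lt_pow_right₀ hb (Nat.lt_succ_self m)
    linarith
  have main : ∀ j, j ≤ K → ∑ i ∈ Finset.range j, v i ≤ c j * b ^ j := by
    intro j
    induction j with
    | zero => simp [hc0]
    | succ n ih =>
      intro hn
      have hn' : n < K := hn
      have h1 := ih (le_of_lt hn')
      have hb1 : (1:ℝ) ≤ b ^ n := one_le_pow₀ (le_of_lt hb)
      have hvn := hv n hn'
      rw [Finset.sum_range_succ]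
      calc ∑ i ∈ Finset.range n, v i + v n
          ≤ c n * b ^ n + v n * b ^ n := by nlinarith
        _ = (c n + v n) * b ^ n := by ring
        _ ≤ (b * c (n + 1)) * b ^ n :=
            mul_le_mul_of_nonneg_right (key n hn') (by positivity)
        _ = c (n + 1) * b ^ (n + 1) := by ring
  have hS : 0 ≤ ∑ j ∈ Finset.range K, v j :=
    Finset.sum_nonneg fun j hj => le_trans zero_le_one (hv j (Finset.mem_range.mp hj))
  have hmK := main K le_rfl
  have hbK : 0 < b ^ K := pow_pos hbpos K
  have hcK : 0 ≤ c K := by nlinarith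
  have hexp : b ^ K ≤ Real.exp ε := by
    have h1 : b ≤ Real.exp (ε / K) := by
      have := Real.add_one_le_exp (ε / K)
      simp [hbdef]; linarith
    calc b ^ K ≤ Real.exp (ε / K) ^ K := pow_le_pow_left₀ (le_of_lt hbpos) h1 K
      _ = Real.exp (ε / K * K) := by rw [← Real.exp_nat_mul]; ring_nf
      _ = Real.exp ε := by rw [div_mul_cancel₀]; exact ne_of_gt hKpos
  have h1e : 1 - ε ≤ Real.exp (-ε) := by linarith [Real.add_one_le_exp (-ε)]
  have hprod : (1 - ε) * b ^ K ≤ 1 := by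
    rcases le_or_gt (1 - ε) 0 with h | h
    · nlinarith
    · calc (1 - ε) * b ^ K ≤ Real.exp (-ε) * Real.exp ε :=
          mul_le_mul h1e hexp (le_of_lt hbK) (Real.exp_nonneg _)
        _ = 1 := by rw [← Real.exp_add]; simp
  rcases le_or_gt (1 - ε) 0 with h | h
  · calc (1 - ε) * ∑ j ∈ Finset.range K, v j ≤ 0 := mul_nonpos_of_nonpos_of_nonneg h hS
      _ ≤ c K := hcK
  · calc (1 - ε) * ∑ j ∈ Finset.range K, v j
        ≤ (1 - ε) * (c K * b ^ K) := by
          exact mul_le_mul_of_nonneg_left hmK (le_of_lt h)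
      _ = c K * ((1 - ε) * b ^ K) := by ring
      _ ≤ c K * 1 := mul_le_mul_of_nonneg_left hprod hcK
      _ = c K := mul_one _
end

section
/- Let M be a positive integer and let f be a real-valued function on the integers such that f(X) = 0 for every X <= 0 and, for every integer X >= 1, f(X) >= (1 - 1/M) * f(X-1) + (1/M) * (f(X-M) + 1). Then f(X) >= X / (2M - 1) for every integer X >= 0. -/
/-- if `f : ℤ → ℝ` vanishes on nonpositive integers and satisfies the
recurrence inequality `f(X) ≥ (1 - 1/M) f(X-1) + (1/M) (f(X-M) + 1)` for all `X ≥ 1`,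
then `f(X) ≥ X / (2M - 1)` for all `X ≥ 0`. -/
theorem stmt3 (M : ℕ) (hM : 0 < M) (f : ℤ → ℝ)
    (h0 : ∀ X : ℤ, X ≤ 0 → f X = 0)
    (hrec : ∀ X : ℤ, 1 ≤ X →
      (1 - 1 / (M : ℝ)) * f (X - 1) + (1 / (M : ℝ)) * (f (X - M) + 1) ≤ f X) :
    ∀ X : ℤ, 0 ≤ X → (X : ℝ) / (2 * (M : ℝ) - 1) ≤ f X := by
  have hM1 : (1:ℝ) ≤ M := by exact_mod_cast hM
  have hMpos : (0:ℝ) < M := by linarith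
  have hc : (0:ℝ) < 2 * (M:ℝ) - 1 := by linarith
  have key : ∀ n : ℕ, ∀ X : ℤ, X ≤ (n:ℤ) → (X : ℝ) / (2 * (M : ℝ) - 1) ≤ f X := by
    intro n
    induction n using Nat.strong_induction_on with
    | _ n ih =>
      intro X hX
      rcases le_or_gt X 0 with h | h
      · rw [h0 X h]
        have hX0 : (X:ℝ) ≤ 0 := by exact_mod_cast h
        exact div_nonpos_of_nonpos_of_nonneg hX0 hc.le
      · have h1 : 1 ≤ X := h
        have hn1 : 1 ≤ n := by
          by_contra hcon
          push_neg at hcon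
          interval_cases n <;> omega
        have hIH1 : ((X:ℝ) - 1) / (2 * (M:ℝ) - 1) ≤ f (X - 1) := by
          have := ih (n - 1) (by omega) (X - 1) (by push_cast; omega)
          push_cast at this; linarith
        have hIH2 : ((X:ℝ) - M) / (2 * (M:ℝ) - 1) ≤ f (X - M) := by
          have := ih (n - 1) (by omega) (X - M) (by push_cast; omega)
          push_cast at this; linarith
        have hrecX := hrec X h1
        have h1M : (0:ℝ) < 1 / M := by positivity
        have h1M' : (0:ℝ) ≤ 1 - 1 / M := by
          rw [sub_nonneg, div_le_one hMpos]; exact hM1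
        rw [div_le_iff₀ hc] at hIH1 hIH2 ⊢
        have e : (M:ℝ) * ((1 - 1 / (M:ℝ)) * f (X - 1) + (1 / (M:ℝ)) * (f (X - M) + 1))
            = ((M:ℝ) - 1) * f (X - 1) + (f (X - M) + 1) := by
          field_simp
          try ring
        have h2 : ((M:ℝ) - 1) * f (X - 1) + (f (X - M) + 1) ≤ (M:ℝ) * f X := by
          have := mul_le_mul_of_nonneg_left hrecX hMpos.le
          linarith [this, e.symm.le]
        have hM1' : (0:ℝ) ≤ (M:ℝ) - 1 := by linarith
        nlinarith [mul_le_mul_of_nonneg_left hIH1 hM1', hIH2, h2, hMpos, hc]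
  intro X hX
  exact key X.toNat X (by simp [Int.toNat_of_nonneg hX])
end

section
/- Let M >= 2 be an integer and set x = 1 - 1/M. Then for every integer C with 0 <= C <= M-1, f_contain(C) * f_intersect(M-1-C) >= f_contain(M-1) * f_intersect(0) = (1 - 1/M)^{M-1}; that is, the quantity f_contain(C) * f_intersect(M-1-C) is minimized over integer C in {0, ..., M-1} at C = M-1. -/
/-- `f_contain(C) = (1 - 1/M)^C`. -/
noncomputable def fContain (M C : ℕ) : ℝ := (1 - 1 / (M : ℝ)) ^ C

/-- `f_intersect(C) = (∑_{i=0}^{2C} (1 - 1/M)^i) / (2C + 1)`. -/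
noncomputable def fIntersect (M C : ℕ) : ℝ :=
  (∑ i ∈ Finset.range (2 * C + 1), (1 - 1 / (M : ℝ)) ^ i) / (2 * C + 1)

lemma key_amgm (x : ℝ) (hx : 0 ≤ x) :
    ∀ D : ℕ, (2 * (D : ℝ) + 1) * x ^ D ≤ ∑ i ∈ Finset.range (2 * D + 1), x ^ i := by
  intro D
  induction D with
  | zero => simp
  | succ D ih =>
    have hsplit : ∑ i ∈ Finset.range (2 * (D + 1) + 1), x ^ i
        = 1 + x ^ (2 * D + 2) + x * ∑ i ∈ Finset.range (2 * D + 1), x ^ i := by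
      have h1 : 2 * (D + 1) + 1 = (2 * D + 2) + 1 := by ring
      rw [h1, geom_sum_succ, Finset.sum_range_succ]
      ring
    rw [hsplit]
    have h2 : x * ((2 * (D : ℝ) + 1) * x ^ D) ≤ x * ∑ i ∈ Finset.range (2 * D + 1), x ^ i :=
      mul_le_mul_of_nonneg_left ih hx
    have h3 : 2 * x ^ (D + 1) ≤ 1 + x ^ (2 * D + 2) := by
      have hsq := sq_nonneg (1 - x ^ (D + 1))
      have hpow : x ^ (2 * D + 2) = (x ^ (D + 1)) ^ 2 := by
        rw [← pow_mul]; ring_nf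
      nlinarith [hsq]
    have h4 : (2 * ((D : ℕ) + 1 : ℝ) + 1) * x ^ (D + 1)
        = 2 * x ^ (D + 1) + x * ((2 * (D : ℝ) + 1) * x ^ D) := by
      -- cast done
      ring
    push_cast
    push_cast at h4
    linarith [h2, h3]

/-- for `M ≥ 2` and `0 ≤ C ≤ M - 1`, the quantity
`f_contain(C) * f_intersect(M-1-C)` is minimized at `C = M-1`, where it equals
`(1 - 1/M)^{M-1}`. -/
theorem stmt6 (M : ℕ) (hM : 2 ≤ M) (C : ℕ) (hC : C ≤ M - 1) :
    fContain M (M - 1) * fIntersect M 0 ≤ fContain M C * fIntersect M (M - 1 - C) ∧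
    fContain M (M - 1) * fIntersect M 0 = (1 - 1 / (M : ℝ)) ^ (M - 1) := by
  have hM2 : (2 : ℝ) ≤ (M : ℝ) := by exact_mod_cast hM
  have hMpos : (0 : ℝ) < (M : ℝ) := by linarith
  have hx0 : (0 : ℝ) ≤ 1 - 1 / (M : ℝ) := by
    rw [sub_nonneg, div_le_one hMpos]; linarith
  have hI0 : fIntersect M 0 = 1 := by simp [fIntersect]
  set x : ℝ := 1 - 1 / (M : ℝ) with hxdef
  refine ⟨?_, by rw [hI0, mul_one]; rfl⟩
  rw [hI0, mul_one]
  set D := M - 1 - C with hD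
  have hCD : C + D = M - 1 := Nat.add_sub_cancel' hC
  have hkey := key_amgm x hx0 D
  have hpos : (0 : ℝ) < 2 * (D : ℝ) + 1 := by positivity
  show x ^ (M - 1) ≤ fContain M C * fIntersect M D
  unfold fContain fIntersect
  rw [← hxdef, ← mul_div_assoc, le_div_iff₀ hpos]
  calc x ^ (M - 1) * (2 * (D : ℝ) + 1) = (2 * (D : ℝ) + 1) * x ^ D * x ^ C := by
        rw [← hCD, pow_add]; ring
    _ ≤ (∑ i ∈ Finset.range (2 * D + 1), x ^ i) * x ^ C :=
        mul_le_mul_of_nonneg_right hkey (pow_nonneg hx0 C)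
    _ = x ^ C * ∑ i ∈ Finset.range (2 * D + 1), x ^ i := by ring
end

section
/- Let M >= 2 be an integer. Then for every integer C with 0 <= C <= M-1, f_contain(C) * f_intersect(M-1-C) >= 1/e, where e is Euler's number. In particular, (1 - 1/M)^{M-1} >= 1/e. -/
open Finset Real

section GeometricProgression

variable {R : Type*} [CommRing R] [LinearOrder R] [IsStrictOrderedRing R] {q : R}

theorem two_mul_pow_le_pow_add_pow (hq : 0 ≤ q) {i j D : ℕ} (hij : i + j = 2 * D) :
    2 * q ^ D ≤ q ^ i + q ^ j := by
  wlog hle : i ≤ j generalizing i j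
  · rw [add_comm]
    exact this (by omega) (by omega)
  obtain ⟨k, rfl, rfl⟩ : ∃ k, D = i + k ∧ j = i + 2 * k := ⟨D - i, by omega, by omega⟩
  have hsq : 0 ≤ q ^ i * (1 - q ^ k) ^ 2 := mul_nonneg (pow_nonneg hq i) (sq_nonneg _)
  calc 2 * q ^ (i + k) = q ^ i + q ^ (i + 2 * k) - q ^ i * (1 - q ^ k) ^ 2 := by ring
    _ ≤ q ^ i + q ^ (i + 2 * k) := sub_le_self _ hsq

theorem mul_pow_le_sum_range_pow (hq : 0 ≤ q) (D : ℕ) :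
    (2 * D + 1 : R) * q ^ D ≤ ∑ i ∈ range (2 * D + 1), q ^ i := by
  have hreflect : ∑ i ∈ range (2 * D + 1), q ^ (2 * D - i) = ∑ i ∈ range (2 * D + 1), q ^ i :=
    sum_range_reflect (q ^ ·) (2 * D + 1)
  have hpairs : ∑ _i ∈ range (2 * D + 1), 2 * q ^ D
      ≤ ∑ i ∈ range (2 * D + 1), (q ^ i + q ^ (2 * D - i)) :=
    sum_le_sum fun i hi => two_mul_pow_le_pow_add_pow hq (by rw [mem_range] at hi; omega)
  rw [sum_const, card_range, nsmul_eq_mul, sum_add_distrib, hreflect] at hpairs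
  push_cast at hpairs
  linarith

end GeometricProgression

theorem one_sub_one_div_nonneg (M : ℕ) : 0 ≤ 1 - 1 / (M : ℝ) := by
  rcases M.eq_zero_or_pos with rfl | hM
  · simp
  · exact sub_nonneg.2 (div_le_one_of_le₀ (by exact_mod_cast hM) M.cast_nonneg)

theorem pow_le_fIntersect (M D : ℕ) : (1 - 1 / (M : ℝ)) ^ D ≤ fIntersect M D := by
  rw [fIntersect, le_div_iff₀ (by positivity), mul_comm]
  exact mul_pow_le_sum_range_pow (one_sub_one_div_nonneg M) D

theorem one_div_exp_one_le_one_sub_one_div_pow (M : ℕ) :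
    1 / exp 1 ≤ (1 - 1 / (M : ℝ)) ^ (M - 1) := by
  obtain _ | _ | n := M
  · simpa using inv_le_one_of_one_le₀ (one_le_exp zero_le_one)
  · simpa using inv_le_one_of_one_le₀ (one_le_exp zero_le_one)
  have hbase : 1 - 1 / ((n + 2 : ℕ) : ℝ) = (1 + ((n + 1 : ℕ) : ℝ)⁻¹)⁻¹ := by
    push_cast
    field_simp
    ring
  rw [hbase, Nat.add_sub_cancel, inv_pow, one_div]
  exact inv_anti₀ (by positivity) one_add_inv_pow_le_exp

theorem stmt7_general (M : ℕ) (C : ℕ) (hC : C ≤ M - 1) :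
    1 / Real.exp 1 ≤ fContain M C * fIntersect M (M - 1 - C) ∧
    1 / Real.exp 1 ≤ (1 - 1 / (M : ℝ)) ^ (M - 1) := by
  have hexp := one_div_exp_one_le_one_sub_one_div_pow M
  refine ⟨?_, hexp⟩
  calc 1 / exp 1 ≤ (1 - 1 / (M : ℝ)) ^ (M - 1) := hexp
    _ = fContain M C * (1 - 1 / (M : ℝ)) ^ (M - 1 - C) := by
      rw [fContain, ← pow_add, Nat.add_sub_cancel' hC]
    _ ≤ fContain M C * fIntersect M (M - 1 - C) :=
      mul_le_mul_of_nonneg_left (pow_le_fIntersect M _)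
        (pow_nonneg (one_sub_one_div_nonneg M) C)

/-- for `M ≥ 2` and `0 ≤ C ≤ M - 1`,
`f_contain(C) * f_intersect(M-1-C) ≥ 1/e`; in particular `(1 - 1/M)^{M-1} ≥ 1/e`. -/
theorem stmt7 (M : ℕ) (hM : 2 ≤ M) (C : ℕ) (hC : C ≤ M - 1) :
    1 / Real.exp 1 ≤ fContain M C * fIntersect M (M - 1 - C) ∧
    1 / Real.exp 1 ≤ (1 - 1 / (M : ℝ)) ^ (M - 1) :=
  stmt7_general M C hC
end

section
/- Let M be a positive integer and let A be a finite family of jobs that forms an M-machine schedule. Assign each job of A independently and uniformly at random to one of M machines, and for a machine p let N_p denote the maximum cardinality of a pairwise disjoint subfamily of the jobs assigned to machine p. Then for each fixed machine p, the expected value of N_p is at least |A| / (2M - 1). -/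
open scoped Classical in
/-- The maximum cardinality of a pairwise disjoint subfamily of `F`. -/
noncomputable def maxIS (F : Finset (ℝ × ℝ)) : ℕ :=
  (F.powerset.filter JobsDisjoint).sup Finset.card

/-!
Let the greedy algorithm run through the jobs in order of finishing time and select, for
machine `p`, every job assigned to `p` that is disjoint from all jobs selected before it. The
selected jobs are pairwise disjoint, so their number is at most `N_p`. A job assigned to `p` but
rejected contains the right endpoint of an earlier selected job `b`, and since the family is an
`M`-machine schedule, at most `M - 1` jobs other than `b` contain that point. Whether `b` is
selected depends only on the machines of the jobs finishing no later than `b`, so each of these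
later jobs lands on `p` independently of that event, with probability `1 / M`. Hence
`|A| / M = E[#jobs on p] ≤ E[#selected] + (M - 1) / M * E[#selected]`.
-/

open Finset Function

section Greedy

variable {ι : Type*} {r : ι → ι → Prop} (hr : WellFounded r) (compat : ι → ι → Prop)

def greedy (cand : ι → Prop) : ι → Prop :=
  hr.fix fun b IH => cand b ∧ ∀ c (hcb : r c b), IH c hcb → compat c b

variable {hr compat} {cand : ι → Prop}

theorem greedy_iff {b : ι} :
    greedy hr compat cand b ↔ cand b ∧ ∀ c, r c b → greedy hr compat cand c → compat c b :=
  Iff.of_eq (hr.fix_eq _ b)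

theorem greedy_congr [IsTrans ι r] {cand' : ι → Prop} {b : ι}
    (h : ∀ c, c = b ∨ r c b → (cand c ↔ cand' c)) :
    greedy hr compat cand b ↔ greedy hr compat cand' b := by
  induction b using hr.induction with
  | _ b ih =>
  rw [greedy_iff, greedy_iff, h b (.inl rfl)]
  refine and_congr_right fun _ => forall_congr' fun c => imp_congr_right fun hcb => ?_
  rw [ih c hcb fun d hd => h d (.inr (hd.elim (· ▸ hcb) (_root_.trans · hcb)))]

end Greedy

section Counting

variable {ι β : Type*} [Fintype ι] [DecidableEq ι] [Fintype β] [DecidableEq β]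

theorem card_mul_card_filter_and_apply_eq {Q : (ι → β) → Prop} [DecidablePred Q] {a : ι}
    (hQ : ∀ g w, Q (update g a w) ↔ Q g) (v : β) :
    Fintype.card β * #{g | Q g ∧ g a = v} = #{g | Q g} := by
  have hfiber : ∀ w, #{g | Q g ∧ g a = w} = #{g | Q g ∧ g a = v} := fun w =>
    card_bij' (fun g _ => update g a v) (fun g _ => update g a w)
      (fun g hg => by simp_all) (fun g hg => by simp_all)
      (fun g hg => by simp only [mem_filter] at hg; rw [update_idem, ← hg.2.2, update_eq_self])
      (fun g hg => by simp only [mem_filter] at hg; rw [update_idem, ← hg.2.2, update_eq_self])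
  rw [card_eq_sum_card_fiberwise (s := {g | Q g}) (f := fun g => g a) (t := univ)
    (fun _ _ => mem_univ _)]
  simp only [filter_filter, hfiber, sum_const, card_univ, smul_eq_mul]

theorem card_mul_sum_card_filter_apply_eq (v : β) :
    Fintype.card β * ∑ g : ι → β, #{a | g a = v} =
      Fintype.card ι * Fintype.card β ^ Fintype.card ι := by
  have hcoord (a : ι) :
      Fintype.card β * #{g : ι → β | g a = v} = Fintype.card β ^ Fintype.card ι := by
    simpa using card_mul_card_filter_and_apply_eq (Q := fun _ : ι → β => True) (a := a) (by simp) v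
  simp only [card_filter]
  rw [sum_comm, mul_sum]
  simp only [← card_filter, hcoord, sum_const, card_univ, smul_eq_mul]

theorem card_mul_sum_sum_card_filter_le {G : (ι → β) → Finset ι} {C : ι → Finset ι} {k : ℕ}
    (hC : ∀ b, #(C b) ≤ k) (hG : ∀ b, ∀ a ∈ C b, ∀ g w, b ∈ G (update g a w) ↔ b ∈ G g)
    (v : β) :
    Fintype.card β * ∑ g, ∑ b ∈ G g, #{a ∈ C b | g a = v} ≤ k * ∑ g, #(G g) := by
  have hswap : ∑ g, ∑ b ∈ G g, #{a ∈ C b | g a = v} =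
      ∑ b, ∑ a ∈ C b, #{g | b ∈ G g ∧ g a = v} := by
    rw [sum_comm' (t' := univ) (s' := fun b => {g | b ∈ G g}) (by simp)]
    refine sum_congr rfl fun b _ => ?_
    simp only [card_filter]
    rw [sum_comm]
    simp only [← card_filter, filter_filter]
  calc Fintype.card β * ∑ g, ∑ b ∈ G g, #{a ∈ C b | g a = v}
      = ∑ b, #(C b) * #{g | b ∈ G g} := by
        simp only [hswap, mul_sum]
        refine sum_congr rfl fun b _ => ?_
        rw [sum_congr rfl fun a ha => card_mul_card_filter_and_apply_eq (hG b a ha) v,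
          sum_const, smul_eq_mul]
    _ ≤ ∑ b, k * #{g | b ∈ G g} := by gcongr; exact hC _
    _ = k * ∑ g, #(G g) := by
        rw [← mul_sum]
        congr 1
        simpa [bipartiteAbove, bipartiteBelow] using
          sum_card_bipartiteAbove_eq_sum_card_bipartiteBelow (fun b g => b ∈ G g)
            (s := univ) (t := univ)

end Counting

theorem Finset.card_le_card_add_sum_card_filter {ι : Type*} [DecidableEq ι] {s t : Finset ι}
    {C : ι → Finset ι} (h : ∀ a ∈ s, a ∉ t → ∃ b ∈ t, a ∈ C b) :
    #s ≤ #t + ∑ b ∈ t, #{a ∈ C b | a ∈ s} :=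
  calc #s ≤ #(t ∪ t.biUnion fun b => {a ∈ C b | a ∈ s}) := card_le_card fun a ha => by
        by_cases hat : a ∈ t
        · exact mem_union_left _ hat
        · obtain ⟨b, hb, hab⟩ := h a ha hat
          exact mem_union_right _ (mem_biUnion.2 ⟨b, hb, mem_filter.2 ⟨hab, ha⟩⟩)
    _ ≤ #t + ∑ b ∈ t, #{a ∈ C b | a ∈ s} :=
        (card_union_le _ _).trans (Nat.add_le_add_left card_biUnion_le _)

theorem IsMSchedule.card_filter_mem_Icc_le {M : ℕ} {A : Finset (ℝ × ℝ)} (hA : IsMSchedule M A)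
    (x : ℝ) : #{j ∈ A | x ∈ Set.Icc j.1 j.2} ≤ M := by
  obtain ⟨f, hf⟩ := hA
  calc #{j ∈ A | x ∈ Set.Icc j.1 j.2} ≤ #(univ : Finset (Fin M)) :=
        card_le_card_of_injOn f (fun _ _ => mem_coe.2 (mem_univ _)) fun j hj j' hj' hjj' => by
          by_contra hne
          simp only [coe_filter, Set.mem_ofPred_eq] at hj hj'
          exact Set.disjoint_left.1 (hf j hj.1 j' hj'.1 hne hjj') hj.2 hj'.2
    _ = M := by simp

namespace IntervalScheduling

variable {A : Finset (ℝ × ℝ)}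

-- The tie-break on left endpoints only makes the order total, so that greedy selections are
-- pairwise comparable.
def finishKey (a : A) : ℝ ×ₗ ℝ := toLex (a.1.2, a.1.1)

theorem finishKey_injective : Injective (finishKey (A := A)) := fun a b h => by
  simp only [finishKey, toLex_inj, Prod.mk.injEq] at h
  exact Subtype.ext (Prod.ext h.2 h.1)

def FinishesBefore (c b : A) : Prop := finishKey c < finishKey b

instance : IsTrans A FinishesBefore := ⟨fun _ _ _ => lt_trans⟩

theorem wellFounded_finishesBefore : WellFounded (FinishesBefore (A := A)) :=
  have : Std.Irrefl (FinishesBefore (A := A)) := ⟨fun _ => lt_irrefl _⟩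
  Finite.wellFounded_of_trans_of_irrefl _

theorem finishesBefore_or_finishesBefore {b c : A} (h : b ≠ c) :
    FinishesBefore b c ∨ FinishesBefore c b :=
  lt_or_gt_of_ne (finishKey_injective.ne h)

theorem right_mem_Icc_of_finishesBefore {a b : A} (hba : FinishesBefore b a)
    (h : ¬ Disjoint (Set.Icc b.1.1 b.1.2) (Set.Icc a.1.1 a.1.2)) :
    b.1.2 ∈ Set.Icc a.1.1 a.1.2 := by
  obtain ⟨t, htb, hta⟩ := Set.not_disjoint_iff.1 h
  refine ⟨hta.1.trans htb.2, ?_⟩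
  exact (Prod.Lex.lt_iff.1 hba).elim le_of_lt fun h => h.1.le

variable {β : Type*}

open scoped Classical in
noncomputable def greedySet (g : A → β) (p : β) : Finset A :=
  {b | greedy wellFounded_finishesBefore
    (fun c b : A => Disjoint (Set.Icc c.1.1 c.1.2) (Set.Icc b.1.1 b.1.2)) (g · = p) b}

theorem mem_greedySet_iff {g : A → β} {p : β} {b : A} :
    b ∈ greedySet g p ↔ g b = p ∧ ∀ c, FinishesBefore c b → c ∈ greedySet g p →
      Disjoint (Set.Icc c.1.1 c.1.2) (Set.Icc b.1.1 b.1.2) := by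
  simp only [greedySet, mem_filter, mem_univ, true_and]
  exact greedy_iff

theorem apply_eq_of_mem_greedySet {g : A → β} {p : β} {b : A} (hb : b ∈ greedySet g p) :
    g b = p :=
  (mem_greedySet_iff.1 hb).1

theorem disjoint_of_mem_greedySet {g : A → β} {p : β} {b c : A} (hb : b ∈ greedySet g p)
    (hc : c ∈ greedySet g p) (hbc : b ≠ c) :
    Disjoint (Set.Icc b.1.1 b.1.2) (Set.Icc c.1.1 c.1.2) := by
  rcases finishesBefore_or_finishesBefore hbc with h | h
  · exact (mem_greedySet_iff.1 hc).2 b h hb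
  · exact ((mem_greedySet_iff.1 hb).2 c h hc).symm

theorem exists_mem_greedySet_right_mem_Icc {g : A → β} {p : β} {a : A} (ha : g a = p)
    (ha' : a ∉ greedySet g p) :
    ∃ b ∈ greedySet g p, FinishesBefore b a ∧ b.1.2 ∈ Set.Icc a.1.1 a.1.2 := by
  rw [mem_greedySet_iff] at ha'
  push Not at ha'
  obtain ⟨b, hba, hb, hab⟩ := ha' ha
  exact ⟨b, hb, hba, right_mem_Icc_of_finishesBefore hba hab⟩

theorem mem_greedySet_update_iff [DecidableEq A] {g : A → β} {p : β} {a b : A}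
    (hba : FinishesBefore b a) (w : β) :
    b ∈ greedySet (update g a w) p ↔ b ∈ greedySet g p := by
  simp only [greedySet, mem_filter, mem_univ, true_and]
  refine greedy_congr fun c hc => ?_
  have hca : c ≠ a := by
    rintro rfl
    rcases hc with rfl | hcb
    · exact lt_irrefl _ hba
    · exact lt_asymm hba hcb
  rw [update_of_ne hca]

theorem card_greedySet_le_maxIS [DecidableEq β] (g : A → β) (p : β) :
    #(greedySet g p) ≤ maxIS ((A.attach.filter (fun j => g j = p)).image Subtype.val) := by
  classical
  rw [← card_image_of_injective _ Subtype.val_injective]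
  refine le_sup (f := card)
    (mem_filter.2 ⟨mem_powerset.2 (image_subset_image fun b hb => ?_), ?_⟩)
  · exact mem_filter.2 ⟨mem_attach _ _, apply_eq_of_mem_greedySet hb⟩
  · simp only [JobsDisjoint, mem_image]
    rintro _ ⟨b, hb, rfl⟩ _ ⟨c, hc, rfl⟩ hbc
    exact disjoint_of_mem_greedySet hb hc (Subtype.coe_injective.ne_iff.1 hbc)

open scoped Classical in
noncomputable def blockedBy (b : A) : Finset A :=
  {a | FinishesBefore b a ∧ b.1.2 ∈ Set.Icc a.1.1 a.1.2}

theorem mem_blockedBy {a b : A} :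
    a ∈ blockedBy b ↔ FinishesBefore b a ∧ b.1.2 ∈ Set.Icc a.1.1 a.1.2 := by
  simp [blockedBy]

theorem card_blockedBy_le {M : ℕ} (hA : IsMSchedule M A) {b : A} (hb : b.1.1 ≤ b.1.2) :
    #(blockedBy b) ≤ M - 1 := by
  classical
  calc #(blockedBy b) = #((blockedBy b).map (Embedding.subtype _)) := (card_map _).symm
    _ ≤ #({j ∈ A | b.1.2 ∈ Set.Icc j.1 j.2}.erase b.1) := card_le_card fun j hj => by
        obtain ⟨a, ha, rfl⟩ := mem_map.1 hj
        obtain ⟨hba, hbIcc⟩ := mem_blockedBy.1 ha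
        exact mem_erase.2
          ⟨fun h => lt_irrefl _ (Subtype.ext h ▸ hba), mem_filter.2 ⟨a.2, hbIcc⟩⟩
    _ = #{j ∈ A | b.1.2 ∈ Set.Icc j.1 j.2} - 1 :=
        card_erase_of_mem (mem_filter.2 ⟨b.2, hb, le_rfl⟩)
    _ ≤ M - 1 := Nat.sub_le_sub_right (hA.card_filter_mem_Icc_le _) 1

theorem card_mul_pow_le_sum_card_greedySet {M : ℕ}
    (hjobs : ∀ j ∈ A, j.1 < j.2) (hA : IsMSchedule M A) (p : Fin M) :
    #A * M ^ #A ≤ (2 * M - 1) * ∑ g : A → Fin M, #(greedySet g p) := by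
  have hassigned := card_mul_sum_card_filter_apply_eq (ι := A) p
  have hcharge (g : A → Fin M) : #{a | g a = p} ≤
      #(greedySet g p) + ∑ b ∈ greedySet g p, #{a ∈ blockedBy b | g a = p} := by
    have h := card_le_card_add_sum_card_filter (s := {a | g a = p}) (C := blockedBy)
      fun a ha ha' => (exists_mem_greedySet_right_mem_Icc (mem_filter.1 ha).2 ha').imp
        fun b ⟨hb, hba, hbIcc⟩ => ⟨hb, mem_blockedBy.2 ⟨hba, hbIcc⟩⟩
    simpa only [mem_filter, mem_univ, true_and] using h
  have hblocked := card_mul_sum_sum_card_filter_le (G := (greedySet · p)) (C := blockedBy)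
    (fun b => card_blockedBy_le hA (hjobs b.1 b.2).le)
    (fun b a ha g w => mem_greedySet_update_iff (mem_blockedBy.1 ha).1 w) p
  simp only [Fintype.card_fin, Fintype.card_coe] at hassigned hblocked
  calc #A * M ^ #A = M * ∑ g : A → Fin M, #{a | g a = p} := hassigned.symm
    _ ≤ M * ∑ g : A → Fin M,
          (#(greedySet g p) + ∑ b ∈ greedySet g p, #{a ∈ blockedBy b | g a = p}) := by
        gcongr with g; exact hcharge g
    _ ≤ M * ∑ g : A → Fin M, #(greedySet g p) +
          (M - 1) * ∑ g : A → Fin M, #(greedySet g p) := by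
        rw [sum_add_distrib, mul_add]; gcongr
    _ = (2 * M - 1) * ∑ g : A → Fin M, #(greedySet g p) := by
        rw [← add_mul]; congr 1; omega

end IntervalScheduling

theorem stmt8_general (M : ℕ) (A : Finset (ℝ × ℝ))
    (hjobs : ∀ j ∈ A, j.1 < j.2)
    (hsched : IsMSchedule M A) (p : Fin M) :
    (A.card : ℝ) / (2 * (M : ℝ) - 1) ≤
      (∑ g : (↥A → Fin M),
        (maxIS ((A.attach.filter (fun j => g j = p)).image Subtype.val) : ℝ)) /
        (M : ℝ) ^ A.card := by
  have hM : (1 : ℝ) ≤ M := by exact_mod_cast p.pos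
  have hcount : (#A : ℝ) * M ^ #A ≤
      (2 * M - 1) * ∑ g : A → Fin M, (#(IntervalScheduling.greedySet g p) : ℝ) := by
    have h := Nat.cast_le (α := ℝ).2
      (IntervalScheduling.card_mul_pow_le_sum_card_greedySet hjobs hsched p)
    push_cast [Nat.cast_sub (by have := p.pos; omega : 1 ≤ 2 * M)] at h
    exact h
  rw [div_le_div_iff₀ (by linarith) (by positivity), mul_comm _ (2 * (M : ℝ) - 1)]
  refine hcount.trans (mul_le_mul_of_nonneg_left (sum_le_sum fun g _ => ?_) (by linarith))
  exact_mod_cast IntervalScheduling.card_greedySet_le_maxIS g p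

/-- if the finite family `A` forms an `M`-machine schedule and each job of `A`
is assigned independently and uniformly at random to one of the `M` machines, then for
each fixed machine `p` the expected maximum cardinality of a pairwise disjoint subfamily
of the jobs assigned to `p` is at least `|A| / (2M - 1)`. -/
theorem stmt8 (M : ℕ) (hM : 0 < M) (A : Finset (ℝ × ℝ))
    (hjobs : ∀ j ∈ A, j.1 < j.2)
    (hsched : IsMSchedule M A) (p : Fin M) :
    (A.card : ℝ) / (2 * (M : ℝ) - 1) ≤
      (∑ g : (↥A → Fin M),
        (maxIS ((A.attach.filter (fun j => g j = p)).image Subtype.val) : ℝ)) /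
        (M : ℝ) ^ A.card :=
  stmt8_general M A hjobs hsched p
end

section
/- Let M be a positive integer, let J be a finite family of jobs where each job I carries a positive real weight w(I), and let OPT be a subfamily of J of maximum total weight among those forming an M-machine schedule. Assign each job of J independently and uniformly at random to one of M machines, and for each machine p let W_p denote the maximum total weight of a pairwise disjoint subfamily of the jobs of J assigned to machine p. Then the expected value of W_1 + ... + W_M is at least w(OPT) / e, where e is Euler's number. Consequently, solving a maximum-weight independent set of intervals (exactly) on each machine after uniformly random job-to-machine assignment yields an e-approximation of optimal weighted interval scheduling on M machines in expectation. -/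
open scoped Classical in
/-- The maximum total weight (w.r.t. `w`) of a pairwise disjoint subfamily of `F`. -/
noncomputable def maxWIS (w : ℝ × ℝ → ℝ) (F : Finset (ℝ × ℝ)) : ℝ :=
  (F.powerset.filter JobsDisjoint).sup'
    ⟨∅, by simp [JobsDisjoint]⟩ (fun T => ∑ j ∈ T, w j)


open Finset

lemma keyCount (M d : ℕ) (hM : 1 ≤ M) (hd : d ≤ M - 1) :
    (M : ℝ) ^ d ≤ Real.exp 1 * ((M : ℝ) - 1) ^ d := by
  obtain ⟨m, rfl⟩ : ∃ m, M = m + 1 := ⟨M - 1, (Nat.succ_pred_eq_of_pos hM).symm⟩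
  simp only [Nat.add_sub_cancel] at hd
  rcases Nat.eq_zero_or_pos m with rfl | hm
  · interval_cases d
    simpa using Real.one_le_exp zero_le_one
  · have hm' : (0:ℝ) < m := by exact_mod_cast hm
    have h1 : ((m:ℝ) + 1) ^ d = (m:ℝ) ^ d * (1 + 1/m) ^ d := by
      rw [← mul_pow]; congr 1; field_simp
    have h2 : (1 + 1/(m:ℝ)) ^ d ≤ (1 + 1/(m:ℝ)) ^ m :=
      pow_le_pow_right₀ (by nlinarith [one_div_pos.mpr hm']) hd
    have h3 : (1 + 1/(m:ℝ)) ^ m ≤ Real.exp 1 := by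
      calc (1 + 1/(m:ℝ)) ^ m ≤ Real.exp (m * (1/m)) := by
            rw [Real.exp_nat_mul]
            exact pow_le_pow_left₀ (by positivity)
              (by linarith [Real.add_one_le_exp (1/(m:ℝ))]) m
        _ = Real.exp 1 := by rw [mul_one_div, div_self (ne_of_gt hm')]
    have hcast : ((m + 1 : ℕ) : ℝ) = (m:ℝ) + 1 := by push_cast; ring
    rw [hcast, h1]
    have hsub : (m:ℝ) + 1 - 1 = (m:ℝ) := by ring
    rw [hsub]
    calc (m:ℝ)^d * (1+1/m)^d ≤ (m:ℝ)^d * Real.exp 1 :=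
          mul_le_mul_of_nonneg_left (h2.trans h3) (by positivity)
      _ = Real.exp 1 * (m:ℝ)^d := mul_comm _ _

lemma countCard {ι : Type*} [Fintype ι] [DecidableEq ι] (M : ℕ)
    (a : ι) (B : Finset ι) (ha : a ∉ B) :
    (Finset.univ.filter (fun g : ι → Fin M => ∀ x ∈ B, g x ≠ g a)).card
      = M * ((M - 1) ^ B.card * M ^ (Fintype.card ι - 1 - B.card)) := by
  classical
  rw [Finset.card_eq_sum_card_fiberwise
    (f := fun g : ι → Fin M => g a) (t := Finset.univ) (fun g _ => mem_univ _)]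
  have key : ∀ c : Fin M,
      ((Finset.univ.filter (fun g : ι → Fin M => ∀ x ∈ B, g x ≠ g a)).filter
        (fun g => g a = c)).card = (M - 1) ^ B.card * M ^ (Fintype.card ι - 1 - B.card) := by
    intro c
    have hset : (Finset.univ.filter (fun g : ι → Fin M => ∀ x ∈ B, g x ≠ g a)).filter
        (fun g => g a = c)
        = Fintype.piFinset (fun i => if i = a then {c} else if i ∈ B then {c}ᶜ else Finset.univ) := by
      ext g
      simp only [mem_filter, mem_univ, true_and, Fintype.mem_piFinset]
      constructor
      · rintro ⟨hblk, hac⟩ i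
        by_cases hia : i = a
        · subst hia; simp [hac]
        · by_cases hib : i ∈ B
          · simp [hia, hib, hac ▸ hblk i hib]
          · simp [hia, hib]
      · intro h
        have hac : g a = c := by have := h a; simpa using this
        refine ⟨fun x hx => ?_, hac⟩
        have := h x
        have hxa : x ≠ a := fun e => ha (e ▸ hx)
        rw [if_neg hxa, if_pos hx] at this
        simp only [mem_compl, mem_singleton] at this
        rw [hac]; exact this
    rw [hset, Fintype.card_piFinset]
    have hcc : ∀ i : ι, (if i = a then ({c} : Finset (Fin M)) else if i ∈ B then {c}ᶜ else Finset.univ).card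
        = if i = a then 1 else if i ∈ B then M - 1 else M := by
      intro i
      by_cases hia : i = a
      · simp [hia]
      · by_cases hib : i ∈ B
        · simp [hia, hib, card_compl, Fintype.card_fin]
        · simp [hia, hib]
    rw [Finset.prod_congr rfl (fun i _ => hcc i)]
    rw [← Finset.prod_erase_mul _ _ (mem_univ a), if_pos rfl, mul_one]
    rw [Finset.prod_congr rfl (fun i (hi : i ∈ univ.erase a) =>
      if_neg (Finset.mem_erase.mp hi).1)]
    rw [← Finset.prod_filter_mul_prod_filter_not (univ.erase a) (· ∈ B)]
    have h1 : (univ.erase a).filter (· ∈ B) = B := by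
      ext x
      simp only [mem_filter, mem_erase, mem_univ, true_and, and_true]
      exact ⟨fun h => h.2, fun h => ⟨fun e => ha (by rwa [e] at h), h⟩⟩
    have h2 : ((univ.erase a).filter (· ∉ B)).card = Fintype.card ι - 1 - B.card := by
      have hadd := Finset.card_filter_add_card_filter_not
        (s := univ.erase a) (p := (· ∈ B))
      rw [h1, Finset.card_erase_of_mem (mem_univ a), card_univ] at hadd
      omega
    rw [Finset.prod_congr h1 (fun i hi => if_pos hi),
        Finset.prod_congr rfl (fun i (hi : i ∈ (univ.erase a).filter (· ∉ B)) =>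
          if_neg (Finset.mem_filter.mp hi).2),
        Finset.prod_const, Finset.prod_const, h2]
  calc ∑ c : Fin M, ((Finset.univ.filter (fun g : ι → Fin M => ∀ x ∈ B, g x ≠ g a)).filter
        (fun g => g a = c)).card
      = ∑ _c : Fin M, (M - 1) ^ B.card * M ^ (Fintype.card ι - 1 - B.card) :=
        Finset.sum_congr rfl (fun c _ => key c)
    _ = M * ((M - 1) ^ B.card * M ^ (Fintype.card ι - 1 - B.card)) := by
        rw [Finset.sum_const, card_univ, Fintype.card_fin, smul_eq_mul]

/-- Extension of an assignment on `↥J` to all of `ℝ × ℝ`. -/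
noncomputable def Gext (J : Finset (ℝ × ℝ)) {M : ℕ} (hM : 0 < M) (g : ↥J → Fin M) (x : ℝ × ℝ) : Fin M :=
  if h : x ∈ J then g ⟨x, h⟩ else ⟨0, hM⟩

open scoped Classical in
/-- The set of "blockers" of `j` in `OPT`: lexicographically earlier jobs overlapping `j`. -/
noncomputable def Blk (OPT : Finset (ℝ × ℝ)) (j : ℝ × ℝ) : Finset (ℝ × ℝ) :=
  OPT.filter (fun j' => j' ≠ j ∧ ¬ Disjoint (Set.Icc j'.1 j'.2) (Set.Icc j.1 j.2) ∧
    (j'.1 < j.1 ∨ (j'.1 = j.1 ∧ j'.2 < j.2)))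

/-- let `OPT` be a maximum-weight `M`-machine schedule among subfamilies of
`J`. If each job of `J` is assigned independently and uniformly at random to one of `M`
machines and on each machine we take a maximum-weight pairwise disjoint subfamily of the
jobs assigned to it, then the expected total weight scheduled is at least `w(OPT) / e`. -/
theorem stmt10 (M : ℕ) (hM : 0 < M) (J : Finset (ℝ × ℝ))
    (hjobs : ∀ j ∈ J, j.1 < j.2)
    (w : ℝ × ℝ → ℝ) (hw : ∀ j ∈ J, 0 < w j)
    (OPT : Finset (ℝ × ℝ)) (hOPTsub : OPT ⊆ J) (hOPTsched : IsMSchedule M OPT)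
    (hOPTmax : ∀ T ⊆ J, IsMSchedule M T → ∑ j ∈ T, w j ≤ ∑ j ∈ OPT, w j) :
    (∑ j ∈ OPT, w j) / Real.exp 1 ≤
      (∑ g : (↥J → Fin M), ∑ p : Fin M,
        maxWIS w ((J.attach.filter (fun j => g j = p)).image Subtype.val)) /
        (M : ℝ) ^ J.card := by
  classical
  obtain ⟨f, hf⟩ := hOPTsched
  -- every blocker of j contains the point j.1
  have hblk_pt : ∀ j ∈ OPT, ∀ j' ∈ Blk OPT j, j.1 ∈ Set.Icc j'.1 j'.2 := by
    intro j hj j' hj'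
    obtain ⟨hj'O, hne, hnd, hlex⟩ := Finset.mem_filter.mp hj'
    obtain ⟨x, hx1, hx2⟩ := Set.not_disjoint_iff.mp hnd
    constructor
    · rcases hlex with h | ⟨h, _⟩ <;> linarith
    · exact le_trans hx2.1 hx1.2
  have hBl_card : ∀ j ∈ OPT, (Blk OPT j).card ≤ M - 1 := by
    intro j hj
    have hinj : Set.InjOn f (Blk OPT j) := by
      intro x hx y hy hxy
      by_contra hne
      have hx' := Finset.mem_coe.mp hx
      have hy' := Finset.mem_coe.mp hy
      have hxO : x ∈ OPT := (Finset.mem_filter.mp hx').1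
      have hyO : y ∈ OPT := (Finset.mem_filter.mp hy').1
      have hdisj := hf x hxO y hyO hne hxy
      exact Set.disjoint_left.mp hdisj (hblk_pt j hj x hx') (hblk_pt j hj y hy')
    have himg : (Blk OPT j).image f ⊆ Finset.univ.erase (f j) := by
      intro c hc
      obtain ⟨x, hx, rfl⟩ := Finset.mem_image.mp hc
      refine Finset.mem_erase.mpr ⟨?_, Finset.mem_univ _⟩
      intro hfx
      obtain ⟨hxO, hne, hnd, _⟩ := Finset.mem_filter.mp hx
      exact hnd (hf x hxO j hj hne hfx)
    calc (Blk OPT j).card = ((Blk OPT j).image f).card :=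
          (Finset.card_image_of_injOn hinj).symm
      _ ≤ (Finset.univ.erase (f j)).card := Finset.card_le_card himg
      _ = M - 1 := by
          rw [Finset.card_erase_of_mem (Finset.mem_univ _), card_univ, Fintype.card_fin]
  have hBl_cardJ : ∀ j ∈ OPT, (Blk OPT j).card ≤ J.card - 1 := by
    intro j hj
    have hsub : Blk OPT j ⊆ J.erase j := by
      intro x hx
      obtain ⟨hxO, hne, -, -⟩ := Finset.mem_filter.mp hx
      exact Finset.mem_erase.mpr ⟨hne, hOPTsub hxO⟩
    calc (Blk OPT j).card ≤ (J.erase j).card := Finset.card_le_card hsub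
      _ = J.card - 1 := Finset.card_erase_of_mem (hOPTsub hj)
  -- per-assignment lower bound
  have hper : ∀ g : ↥J → Fin M,
      ∑ j ∈ OPT.filter (fun j => ∀ j' ∈ Blk OPT j, Gext J hM g j' ≠ Gext J hM g j), w j ≤
      ∑ p : Fin M, maxWIS w ((J.attach.filter (fun j => g j = p)).image Subtype.val) := by
    intro g
    have hstep : ∀ p : Fin M,
        ∑ j ∈ (OPT.filter (fun j => ∀ j' ∈ Blk OPT j, Gext J hM g j' ≠ Gext J hM g j)).filter
          (fun j => Gext J hM g j = p), w j
        ≤ maxWIS w ((J.attach.filter (fun j => g j = p)).image Subtype.val) := by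
      intro p
      set S := (OPT.filter (fun j => ∀ j' ∈ Blk OPT j, Gext J hM g j' ≠ Gext J hM g j)).filter
        (fun j => Gext J hM g j = p) with hS
      have hsub : S ⊆ (J.attach.filter (fun j => g j = p)).image Subtype.val := by
        intro j hjS
        obtain ⟨hj1, hjp⟩ := Finset.mem_filter.mp hjS
        have hjO : j ∈ OPT := (Finset.mem_filter.mp hj1).1
        have hjJ : j ∈ J := hOPTsub hjO
        refine Finset.mem_image.mpr ⟨⟨j, hjJ⟩, ?_, rfl⟩
        refine Finset.mem_filter.mpr ⟨Finset.mem_attach _ _, ?_⟩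
        rw [Gext, dif_pos hjJ] at hjp
        exact hjp
      have hdisj : JobsDisjoint S := by
        intro x hx y hy hxy
        by_contra hnd
        have hGx : Gext J hM g x = p := (Finset.mem_filter.mp hx).2
        have hGy : Gext J hM g y = p := (Finset.mem_filter.mp hy).2
        have hxm := Finset.mem_filter.mp (Finset.mem_filter.mp hx).1
        have hym := Finset.mem_filter.mp (Finset.mem_filter.mp hy).1
        have hlex : (x.1 < y.1 ∨ (x.1 = y.1 ∧ x.2 < y.2)) ∨
            (y.1 < x.1 ∨ (y.1 = x.1 ∧ y.2 < x.2)) := by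
          rcases lt_trichotomy x.1 y.1 with h | h | h
          · exact Or.inl (Or.inl h)
          · rcases lt_trichotomy x.2 y.2 with h2 | h2 | h2
            · exact Or.inl (Or.inr ⟨h, h2⟩)
            · exact absurd (Prod.ext h h2) hxy
            · exact Or.inr (Or.inr ⟨h.symm, h2⟩)
          · exact Or.inr (Or.inl h)
        rcases hlex with hl | hl
        · have hxB : x ∈ Blk OPT y :=
            Finset.mem_filter.mpr ⟨hxm.1, hxy, hnd, hl⟩
          exact hym.2 x hxB (by rw [hGx, hGy])
        · have hyB : y ∈ Blk OPT x :=
            Finset.mem_filter.mpr ⟨hym.1, fun e => hxy e.symm, fun hd => hnd hd.symm, hl⟩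
          exact hxm.2 y hyB (by rw [hGx, hGy])
      have hmem : S ∈ (((J.attach.filter (fun j => g j = p)).image
          Subtype.val).powerset.filter JobsDisjoint) :=
        Finset.mem_filter.mpr ⟨Finset.mem_powerset.mpr hsub, hdisj⟩
      exact Finset.le_sup' (fun T => ∑ j ∈ T, w j) hmem
    have hfib : ∑ p : Fin M, ∑ j ∈ (OPT.filter
          (fun j => ∀ j' ∈ Blk OPT j, Gext J hM g j' ≠ Gext J hM g j)).filter
          (fun j => Gext J hM g j = p), w j
        = ∑ j ∈ OPT.filter (fun j => ∀ j' ∈ Blk OPT j, Gext J hM g j' ≠ Gext J hM g j), w j :=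
      Finset.sum_fiberwise_of_maps_to (fun j _ => Finset.mem_univ (Gext J hM g j)) w
    calc ∑ j ∈ OPT.filter (fun j => ∀ j' ∈ Blk OPT j, Gext J hM g j' ≠ Gext J hM g j), w j
        = ∑ p : Fin M, ∑ j ∈ (OPT.filter
            (fun j => ∀ j' ∈ Blk OPT j, Gext J hM g j' ≠ Gext J hM g j)).filter
            (fun j => Gext J hM g j = p), w j := hfib.symm
      _ ≤ ∑ p : Fin M, maxWIS w ((J.attach.filter (fun j => g j = p)).image Subtype.val) :=
          Finset.sum_le_sum (fun p _ => hstep p)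
  -- counting
  have hcount : ∀ j ∈ OPT,
      (Finset.univ.filter (fun g : ↥J → Fin M =>
        ∀ j' ∈ Blk OPT j, Gext J hM g j' ≠ Gext J hM g j)).card
      = M * ((M - 1) ^ (Blk OPT j).card * M ^ (J.card - 1 - (Blk OPT j).card)) := by
    intro j hj
    have hjJ : j ∈ J := hOPTsub hj
    set a : ↥J := ⟨j, hjJ⟩ with ha
    set Bs : Finset ↥J := J.attach.filter (fun x => x.val ∈ Blk OPT j) with hBs
    have haBs : a ∉ Bs := by
      simp only [hBs, Finset.mem_filter]
      rintro ⟨-, hmem⟩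
      exact (Finset.mem_filter.mp hmem).2.1 rfl
    have hcard : Bs.card = (Blk OPT j).card := by
      rw [← Finset.card_image_of_injective Bs Subtype.val_injective]
      congr 1
      ext x
      simp only [Finset.mem_image, hBs, Finset.mem_filter, Finset.mem_attach, true_and]
      constructor
      · rintro ⟨y, hy, rfl⟩; exact hy
      · intro hx
        exact ⟨⟨x, hOPTsub (Finset.mem_filter.mp hx).1⟩, hx, rfl⟩
    have hpred : ∀ g : ↥J → Fin M,
        (∀ j' ∈ Blk OPT j, Gext J hM g j' ≠ Gext J hM g j) ↔ (∀ x ∈ Bs, g x ≠ g a) := by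
      intro g
      constructor
      · intro h x hx
        have hxB : x.val ∈ Blk OPT j := (Finset.mem_filter.mp hx).2
        have hGx : Gext J hM g x.val = g x := by rw [Gext, dif_pos x.2]
        have hGa : Gext J hM g j = g a := by rw [Gext, dif_pos hjJ]
        rw [← hGx, ← hGa]
        exact h x.val hxB
      · intro h j' hj'
        have hj'J : j' ∈ J := hOPTsub (Finset.mem_filter.mp hj').1
        have hmem : (⟨j', hj'J⟩ : ↥J) ∈ Bs :=
          Finset.mem_filter.mpr ⟨Finset.mem_attach _ _, hj'⟩
        have hG1 : Gext J hM g j' = g ⟨j', hj'J⟩ := by rw [Gext, dif_pos hj'J]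
        have hG2 : Gext J hM g j = g a := by rw [Gext, dif_pos hjJ]
        rw [hG1, hG2]
        exact h _ hmem
    rw [Finset.filter_congr (fun g _ => hpred g), countCard M a Bs haBs, hcard,
      Fintype.card_coe]
  -- assembling
  have hswap : ∑ g : ↥J → Fin M, ∑ j ∈ OPT.filter
        (fun j => ∀ j' ∈ Blk OPT j, Gext J hM g j' ≠ Gext J hM g j), w j
      = ∑ j ∈ OPT, ((Finset.univ.filter (fun g : ↥J → Fin M =>
          ∀ j' ∈ Blk OPT j, Gext J hM g j' ≠ Gext J hM g j)).card : ℝ) * w j := by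
    simp_rw [Finset.sum_filter]
    rw [Finset.sum_comm]
    refine Finset.sum_congr rfl fun j hj => ?_
    rw [← Finset.sum_filter, Finset.sum_const, nsmul_eq_mul]
  have hMN : (0:ℝ) < (M:ℝ) ^ J.card := pow_pos (by exact_mod_cast hM) _
  rw [div_le_div_iff₀ (Real.exp_pos 1) hMN]
  -- per-job bound
  have hjob : ∀ j ∈ OPT, w j * (M:ℝ) ^ J.card ≤
      Real.exp 1 * (((Finset.univ.filter (fun g : ↥J → Fin M =>
        ∀ j' ∈ Blk OPT j, Gext J hM g j' ≠ Gext J hM g j)).card : ℝ) * w j) := by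
    intro j hj
    have hjJ : j ∈ J := hOPTsub hj
    have hJpos : 1 ≤ J.card := Finset.card_pos.mpr ⟨j, hjJ⟩
    set d := (Blk OPT j).card with hd
    have hdM : d ≤ M - 1 := hBl_card j hj
    have hdJ : d ≤ J.card - 1 := hBl_cardJ j hj
    have hcast : ((M * ((M - 1) ^ d * M ^ (J.card - 1 - d)) : ℕ) : ℝ)
        = (M:ℝ) * (((M:ℝ) - 1) ^ d * (M:ℝ) ^ (J.card - 1 - d)) := by
      push_cast [Nat.cast_sub hM]
      ring
    have hexp : (M:ℝ) ^ J.card = (M:ℝ) * ((M:ℝ) ^ d * (M:ℝ) ^ (J.card - 1 - d)) := by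
      have hN : J.card = 1 + d + (J.card - 1 - d) := by omega
      conv_lhs => rw [hN]
      rw [pow_add, pow_add, pow_one]
      ring
    have hkey : (M:ℝ) ^ d ≤ Real.exp 1 * ((M:ℝ) - 1) ^ d := keyCount M d hM hdM
    have hMle : (M:ℝ) ^ J.card ≤ Real.exp 1 *
        ((M * ((M - 1) ^ d * M ^ (J.card - 1 - d)) : ℕ) : ℝ) := by
      rw [hcast, hexp]
      have h0 : (0:ℝ) ≤ (M:ℝ) * (M:ℝ) ^ (J.card - 1 - d) := by positivity
      calc (M:ℝ) * ((M:ℝ) ^ d * (M:ℝ) ^ (J.card - 1 - d))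
          = (M:ℝ) ^ d * ((M:ℝ) * (M:ℝ) ^ (J.card - 1 - d)) := by ring
        _ ≤ (Real.exp 1 * ((M:ℝ) - 1) ^ d) * ((M:ℝ) * (M:ℝ) ^ (J.card - 1 - d)) :=
            mul_le_mul_of_nonneg_right hkey h0
        _ = Real.exp 1 * ((M:ℝ) * (((M:ℝ) - 1) ^ d * (M:ℝ) ^ (J.card - 1 - d))) := by ring
    rw [hcount j hj]
    have hwj : 0 ≤ w j := (hw j hjJ).le
    calc w j * (M:ℝ) ^ J.card
        ≤ w j * (Real.exp 1 * ((M * ((M - 1) ^ d * M ^ (J.card - 1 - d)) : ℕ) : ℝ)) :=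
          mul_le_mul_of_nonneg_left hMle hwj
      _ = Real.exp 1 * (((M * ((M - 1) ^ d * M ^ (J.card - 1 - d)) : ℕ) : ℝ) * w j) := by ring
  have hT : ∑ j ∈ OPT, ((Finset.univ.filter (fun g : ↥J → Fin M =>
        ∀ j' ∈ Blk OPT j, Gext J hM g j' ≠ Gext J hM g j)).card : ℝ) * w j
      ≤ ∑ g : ↥J → Fin M, ∑ p : Fin M,
        maxWIS w ((J.attach.filter (fun j => g j = p)).image Subtype.val) := by
    rw [← hswap]
    exact Finset.sum_le_sum (fun g _ => hper g)
  calc (∑ j ∈ OPT, w j) * (M:ℝ) ^ J.card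
      = ∑ j ∈ OPT, w j * (M:ℝ) ^ J.card := Finset.sum_mul _ _ _
    _ ≤ ∑ j ∈ OPT, Real.exp 1 * (((Finset.univ.filter (fun g : ↥J → Fin M =>
          ∀ j' ∈ Blk OPT j, Gext J hM g j' ≠ Gext J hM g j)).card : ℝ) * w j) :=
        Finset.sum_le_sum hjob
    _ = Real.exp 1 * ∑ j ∈ OPT, ((Finset.univ.filter (fun g : ↥J → Fin M =>
          ∀ j' ∈ Blk OPT j, Gext J hM g j' ≠ Gext J hM g j)).card : ℝ) * w j := by
        rw [Finset.mul_sum]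
    _ ≤ Real.exp 1 * ∑ g : ↥J → Fin M, ∑ p : Fin M,
          maxWIS w ((J.attach.filter (fun j => g j = p)).image Subtype.val) :=
        mul_le_mul_of_nonneg_left hT (Real.exp_pos 1).le
    _ = (∑ g : ↥J → Fin M, ∑ p : Fin M,
          maxWIS w ((J.attach.filter (fun j => g j = p)).image Subtype.val)) * Real.exp 1 :=
        mul_comm _ _
end

section
/- Let n be a nonnegative integer and q a real number in [0, 1]. Let sigma be a uniformly random permutation of the set {0, 1, ..., n}, and let B_1, ..., B_n be events, each of probability q, that are mutually independent and independent of sigma. Then the probability that B_j occurs for every j in {1, ..., n} with sigma(j) < sigma(0) equals (1/(n+1)) * (sum over i from 0 to n of q^i). -/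
open MeasureTheory ProbabilityTheory
open scoped ENNReal

-- auxiliary: number of j with π j.succ < π 0 equals π 0
lemma aux_card_T (n : ℕ) (π : Equiv.Perm (Fin (n + 1))) :
    (Finset.univ.filter (fun j : Fin n => π j.succ < π 0)).card = (π 0 : ℕ) := by
  rw [← Fin.card_Iio (b := π 0)]
  apply Finset.card_bij (fun j _ => π j.succ)
  · intro j hj
    simp only [Finset.mem_filter, Finset.mem_univ, true_and] at hj
    simpa [Finset.mem_Iio] using hj
  · intro a ha b hb hab
    exact Fin.succ_injective _ (π.injective hab)
  · intro i hi
    simp only [Finset.mem_Iio] at hi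
    have h0 : π.symm i ≠ 0 := by
      intro h
      have : i = π 0 := by rw [← h, Equiv.apply_symm_apply]
      exact absurd (this ▸ hi) (lt_irrefl _)
    refine ⟨(π.symm i).pred h0, ?_, ?_⟩
    · simp only [Finset.mem_filter, Finset.mem_univ, true_and, Fin.succ_pred,
        Equiv.apply_symm_apply]
      exact hi
    · simp [Fin.succ_pred]

-- auxiliary: sum over permutations of a function of π 0
lemma aux_sum_perm (n : ℕ) (f : Fin (n + 1) → ℝ≥0∞) :
    ∑ π : Equiv.Perm (Fin (n + 1)), f (π 0)
      = (Nat.factorial n : ℝ≥0∞) * ∑ v : Fin (n + 1), f v := by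
  rw [← Equiv.sum_comp Equiv.Perm.decomposeFin.symm (fun π => f (π 0))]
  rw [Fintype.sum_prod_type]
  simp only [Equiv.Perm.decomposeFin_symm_apply_zero]
  rw [Finset.sum_comm]
  simp [Finset.sum_const, Fintype.card_perm, Fintype.card_fin, mul_comm,
    Finset.mul_sum]

/-- let `σ` be a uniformly random permutation of `{0, 1, ..., n}` and let
`B 1, ..., B n` be events, each of probability `q`, mutually independent and independent
of `σ`. Then the probability that `B j` occurs for every `j ∈ {1, ..., n}` preceding
item `0` in the order `σ` equals `(1/(n+1)) ∑_{i=0}^{n} q^i`. -/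
theorem stmt14 (n : ℕ) (q : ℝ) (hq0 : 0 ≤ q) (hq1 : q ≤ 1)
    {Ω : Type*} [MeasurableSpace Ω] (μ : Measure Ω) [IsProbabilityMeasure μ]
    (σ : Ω → Equiv.Perm (Fin (n + 1)))
    (hσunif : ∀ π : Equiv.Perm (Fin (n + 1)),
      μ {ω | σ ω = π} = ((Nat.factorial (n + 1) : ℝ≥0∞))⁻¹)
    (B : Fin n → Set Ω) (hBmeas : ∀ j, MeasurableSet (B j))
    (hBq : ∀ j, μ (B j) = ENNReal.ofReal q)
    (hindep : iIndep
      (fun i : Option (Fin n) =>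
        i.elim (MeasurableSpace.comap σ ⊤)
          (fun j => MeasurableSpace.generateFrom {B j})) μ) :
    μ {ω | ∀ j : Fin n, σ ω j.succ < σ ω 0 → ω ∈ B j}
      = ENNReal.ofReal ((1 / (n + 1)) * ∑ i ∈ Finset.range (n + 1), q ^ i) := by
  classical
  set r : ℝ≥0∞ := ENNReal.ofReal q with hr
  set N : ℝ≥0∞ := (Nat.factorial (n + 1) : ℝ≥0∞) with hN
  set E : Set Ω := {ω | ∀ j : Fin n, σ ω j.succ < σ ω 0 → ω ∈ B j} with hE
  set T : Equiv.Perm (Fin (n + 1)) → Finset (Fin n) :=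
    fun π => Finset.univ.filter (fun j => π j.succ < π 0) with hT
  set S : Equiv.Perm (Fin (n + 1)) → Set Ω := fun π => ⋂ j ∈ T π, B j with hS
  -- key independence computation
  have hSmeas : ∀ π, MeasurableSet (S π) := fun π =>
    Finset.measurableSet_biInter _ (fun j _ => hBmeas j)
  have hg : ∀ π, μ ({ω | σ ω = π} ∩ S π) = N⁻¹ * r ^ ((π 0 : ℕ)) := by
    intro π
    set s : Finset (Option (Fin n)) := insert none ((T π).image some) with hs
    set f : Option (Fin n) → Set Ω := fun i => i.elim {ω | σ ω = π} B with hf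
    have hnone : none ∉ (T π).image some := by simp
    have hmeas : ∀ i ∈ s, MeasurableSet[(fun i : Option (Fin n) =>
        i.elim (MeasurableSpace.comap σ ⊤)
          (fun j => MeasurableSpace.generateFrom {B j})) i] (f i) := by
      intro i hi
      match i with
      | none =>
        exact ⟨{π}, trivial, rfl⟩
      | some j =>
        exact MeasurableSpace.measurableSet_generateFrom rfl
    have hmain := hindep.meas_biInter hmeas
    have hint : ⋂ i ∈ s, f i = {ω | σ ω = π} ∩ S π := by
      rw [hs, Finset.set_biInter_insert]
      congr 1
      rw [hS]
      ext ω
      simp [hf]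
    have hprod : ∏ i ∈ s, μ (f i) = N⁻¹ * r ^ ((π 0 : ℕ)) := by
      rw [hs, Finset.prod_insert hnone, Finset.prod_image (by simp)]
      have : ∏ j ∈ T π, μ (f (some j)) = r ^ (T π).card := by
        have h1 : ∀ j ∈ T π, μ (f (some j)) = r := fun j _ => hBq j
        rw [Finset.prod_congr rfl h1, Finset.prod_const]
      rw [this, aux_card_T n π]
      congr 1
      exact hσunif π
    rw [← hint, hmain, hprod]
  -- decomposition bounds
  have hEdecomp : E = ⋃ π : Equiv.Perm (Fin (n + 1)), ({ω | σ ω = π} ∩ S π) := by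
    ext ω
    simp only [Set.mem_iUnion, Set.mem_inter_iff, Set.mem_setOf_eq, hE, hS]
    constructor
    · intro h
      refine ⟨σ ω, rfl, ?_⟩
      simp only [Set.mem_iInter]
      intro j hj
      rw [hT] at hj
      simp only [Finset.mem_filter] at hj
      exact h j hj.2
    · rintro ⟨π, rfl, hω⟩ j hj
      simp only [Set.mem_iInter] at hω
      exact hω j (by simp [hT, hj])
  set C : ℝ≥0∞ := ∑ π : Equiv.Perm (Fin (n + 1)), N⁻¹ * r ^ ((π 0 : ℕ)) with hC
  have hNfin : N ≠ ⊤ := by simp [hN]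
  have hNpos : N ≠ 0 := by simp [hN, Nat.factorial_ne_zero]
  have hsum1 : ∑ π : Equiv.Perm (Fin (n + 1)), μ {ω | σ ω = π} = 1 := by
    simp only [hσunif]
    rw [Finset.sum_const, Finset.card_univ, Fintype.card_perm, Fintype.card_fin]
    rw [nsmul_eq_mul, ← hN]
    exact ENNReal.mul_inv_cancel hNpos hNfin
  have hupper : μ E ≤ C := by
    rw [hEdecomp]
    calc μ (⋃ π, ({ω | σ ω = π} ∩ S π)) ≤ ∑ π : Equiv.Perm (Fin (n + 1)),
          μ ({ω | σ ω = π} ∩ S π) := by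
          exact measure_iUnion_fintype_le _ _
      _ = C := by rw [hC]; exact Finset.sum_congr rfl (fun π _ => hg π)
  have hlower : C ≤ μ E := by
    have hdiff : ∀ π, μ ({ω | σ ω = π} ∩ S π) + μ ({ω | σ ω = π} \ S π)
        = μ {ω | σ ω = π} := fun π => measure_inter_add_diff _ (hSmeas π)
    have hcompl : Eᶜ ⊆ ⋃ π : Equiv.Perm (Fin (n + 1)), ({ω | σ ω = π} \ S π) := by
      intro ω hω
      refine Set.mem_iUnion.2 ⟨σ ω, rfl, ?_⟩
      intro hωS
      apply hω
      rw [hE]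
      intro j hj
      simp only [hS, Set.mem_iInter] at hωS
      exact hωS j (by simp [hT, hj])
    have hEc : μ Eᶜ ≤ 1 - C := by
      calc μ Eᶜ ≤ ∑ π : Equiv.Perm (Fin (n + 1)), μ ({ω | σ ω = π} \ S π) := by
            refine le_trans (measure_mono hcompl) ?_
            exact measure_iUnion_fintype_le _ _
        _ = ∑ π : Equiv.Perm (Fin (n + 1)),
              (μ {ω | σ ω = π} - μ ({ω | σ ω = π} ∩ S π)) := by
            refine Finset.sum_congr rfl (fun π _ => ?_)
            rw [← hdiff π, ENNReal.add_sub_cancel_left (measure_ne_top μ _)]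
        _ = 1 - C := by
            have hsplit : (∑ π : Equiv.Perm (Fin (n + 1)),
                (μ {ω | σ ω = π} - μ ({ω | σ ω = π} ∩ S π))) + C = 1 := by
              rw [hC, ← Finset.sum_add_distrib, ← hsum1]
              refine Finset.sum_congr rfl (fun π _ => ?_)
              rw [← hg π, ← hdiff π, ENNReal.add_sub_cancel_left (measure_ne_top μ _)]
              ring
            have hCne : C ≠ ⊤ := by
              intro h
              rw [h] at hsplit
              simp at hsplit
            exact ENNReal.eq_sub_of_add_eq hCne hsplit
    have h1 : (1 : ℝ≥0∞) ≤ μ E + μ Eᶜ := by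
      have := measure_union_le (μ := μ) E Eᶜ
      rwa [Set.union_compl_self, measure_univ] at this
    have hC1 : C ≤ 1 := by
      rw [hC, ← hsum1]
      refine Finset.sum_le_sum (fun π _ => ?_)
      rw [← hg π]
      exact measure_mono Set.inter_subset_left
    have : (1 : ℝ≥0∞) - (1 - C) ≤ μ E := by
      rw [tsub_le_iff_right]
      calc (1:ℝ≥0∞) ≤ μ E + μ Eᶜ := h1
        _ ≤ μ E + (1 - C) := by gcongr
    rwa [ENNReal.sub_sub_cancel ENNReal.one_ne_top hC1] at this
  have hEeq : μ E = C := le_antisymm hupper hlower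
  rw [hEeq, hC]
  -- now compute C
  rw [← Finset.mul_sum, aux_sum_perm n (fun v => r ^ ((v : ℕ)))]
  have hNsplit : N⁻¹ * ((Nat.factorial n : ℝ≥0∞) * ∑ v : Fin (n + 1), r ^ ((v : ℕ)))
      = ((n : ℝ≥0∞) + 1)⁻¹ * ∑ i ∈ Finset.range (n + 1), r ^ i := by
    rw [Fin.sum_univ_eq_sum_range (fun i => r ^ i)]
    rw [hN, Nat.factorial_succ, Nat.cast_mul, ENNReal.mul_inv (by simp) (by simp),
      mul_assoc, ← mul_assoc ((Nat.factorial n : ℝ≥0∞))⁻¹,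
      ENNReal.inv_mul_cancel (by simp [Nat.factorial_ne_zero]) (by simp), one_mul]
    push_cast
    ring_nf
  rw [hNsplit]
  have hrhs : ENNReal.ofReal ((1 / (n + 1)) * ∑ i ∈ Finset.range (n + 1), q ^ i)
      = ((n : ℝ≥0∞) + 1)⁻¹ * ∑ i ∈ Finset.range (n + 1), r ^ i := by
    rw [ENNReal.ofReal_mul (by positivity)]
    congr 1
    · rw [one_div, ENNReal.ofReal_inv_of_pos (by positivity)]
      congr 1
      rw [ENNReal.ofReal_add (by positivity) zero_le_one]
      simp [ENNReal.ofReal_natCast]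
    · rw [ENNReal.ofReal_sum_of_nonneg (fun i _ => by positivity)]
      exact Finset.sum_congr rfl (fun i _ => (ENNReal.ofReal_pow hq0 i))
  rw [hrhs]
end
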